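/- Let G be a topologically closed oligomorphic permutation group on a countably infinite set Ω acting without algebraicity, let U ⊆ Ω^n be G-invariant, let ∼ be a G-invariant equivalence relation on U, let B := U/∼ be dense, and assume the induced action of G on B is without algebraicity. Then the entanglement relation is the graph of a bijection θ: Ω → B, and θ is G-equivariant: θ(g·a) = g·θ(a) for all g ∈ G and a ∈ Ω. In particular, the actions of G on Ω and on B are isomorphic via θ. -/

import Mathlib

/-- The topology of pointwise convergence on functions `α → β`
(product topology with `β` discrete). -/
def FnTop (α β : Type*) : TopologicalSpace (α → β) :=
  @Pi.topologicalSpace α (fun _ => β) (fun _ => ⊥)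

/-- The coordinatewise action of a permutation on tuples. -/
def tAct {Ω : Type*} (g : Equiv.Perm Ω) {n : ℕ} (u : Fin n → Ω) : Fin n → Ω :=
  fun i => g (u i)

/-- The action of a permutation on sets of tuples. -/
def sAct {Ω : Type*} (g : Equiv.Perm Ω) {n : ℕ} (c : Set (Fin n → Ω)) : Set (Fin n → Ω) :=
  tAct g '' c

/-- A set of permutations is oligomorphic if for every `n` its coordinatewise
action on `n`-tuples has finitely many orbits. -/
def Oligo {Ω : Type*} (G : Set (Equiv.Perm Ω)) : Prop :=
  ∀ n : ℕ, Set.Finite {o : Set (Fin n → Ω) | ∃ t : Fin n → Ω, o = {s | ∃ g ∈ G, s = tAct g t}}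

/-- `G` acts without algebraicity on `Ω`: if the orbit of `a` under the pointwise
stabiliser of a finite tuple `y` is finite, then `a` is an entry of `y`. -/
def NoAlg {Ω : Type*} (G : Set (Equiv.Perm Ω)) : Prop :=
  ∀ (m : ℕ) (y : Fin m → Ω) (a : Ω),
    Set.Finite {b : Ω | ∃ g ∈ G, (∀ i, g (y i) = y i) ∧ b = g a} → ∃ i, a = y i

/-- `G` is topologically closed in the space of permutations with the topology of
pointwise convergence. -/
def TopClosedPerm {Ω : Type*} (G : Set (Equiv.Perm Ω)) : Prop :=
  @IsClosed (Ω → Ω) (FnTop Ω Ω) {f | ∃ g ∈ G, f = ⇑g}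

/-- The `r`-equivalence class of a tuple `u ∈ U`. -/
def cls {Ω : Type*} {n : ℕ} (U : Set (Fin n → Ω))
    (r : (Fin n → Ω) → (Fin n → Ω) → Prop) (u : Fin n → Ω) : Set (Fin n → Ω) :=
  {v ∈ U | r u v}

/-- The quotient `B = U/∼`, realised as the set of equivalence classes. -/
def classes {Ω : Type*} {n : ℕ} (U : Set (Fin n → Ω))
    (r : (Fin n → Ω) → (Fin n → Ω) → Prop) : Set (Set (Fin n → Ω)) :=
  {c | ∃ u ∈ U, c = cls U r u}

/-- `a` entangles the class `c` if `a` is an entry of every tuple in `c`. -/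
def Entangles {Ω : Type*} {n : ℕ} (a : Ω) (c : Set (Fin n → Ω)) : Prop :=
  ∀ v ∈ c, ∃ i, v i = a

/-- `a` strongly entangles `c ∈ B` if it entangles `c` and no other element of `B`. -/
def StronglyEntangles {Ω : Type*} {n : ℕ} (B : Set (Set (Fin n → Ω))) (a : Ω)
    (c : Set (Fin n → Ω)) : Prop :=
  Entangles a c ∧ ∀ c' ∈ B, Entangles a c' → c' = c

/-- `a` is algebraic over `c`: the orbit of `a` under the stabiliser `G_c` is finite. -/
def AlgebraicOver {Ω : Type*} {n : ℕ} (G : Set (Equiv.Perm Ω)) (a : Ω)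
    (c : Set (Fin n → Ω)) : Prop :=
  Set.Finite {b : Ω | ∃ g ∈ G, sAct g c = c ∧ b = g a}

/-- `B` is dense: for every `a ∈ Ω` there are `c₁,…,c_k ∈ B` whose joint stabiliser
is contained in the stabiliser of `a`. -/
def DenseClasses {Ω : Type*} {n : ℕ} (G : Set (Equiv.Perm Ω))
    (B : Set (Set (Fin n → Ω))) : Prop :=
  ∀ a : Ω, ∃ (k : ℕ) (cc : Fin k → Set (Fin n → Ω)),
    (∀ i, cc i ∈ B) ∧ ∀ g ∈ G, (∀ i, sAct g (cc i) = cc i) → g a = a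

/-- The induced action of `G` on `B` is without algebraicity. -/
def NoAlgOn {Ω : Type*} {n : ℕ} (G : Set (Equiv.Perm Ω))
    (B : Set (Set (Fin n → Ω))) : Prop :=
  ∀ (m : ℕ) (cc : Fin m → Set (Fin n → Ω)) (c : Set (Fin n → Ω)),
    (∀ i, cc i ∈ B) → c ∈ B →
    Set.Finite {c' | ∃ g ∈ G, (∀ i, sAct g (cc i) = cc i) ∧ c' = sAct g c} →
    ∃ i, c = cc i

/-!
Every point `a` entangles some class: density pins `a` down by finitely many classes, and if `a`
entangled none of them, representatives avoiding `a` would pin `a` down by finitely many other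
points, against no algebraicity on `Ω`. The stabiliser of a class has finite orbits on the entries
of its representatives; with the transitivity of finite relative index and Neumann's lemma this
shows that `a` entangles only finitely many classes, and no algebraicity on `B` then leaves one.
The resulting map `θ` is equivariant because entanglement is, injective because `G_a` fixes `θ a`
and so has finite orbits on its entanglers, and surjective because the classes `θ (u i)` of the
entries of a representative `u` pin down its class.
-/

open MulAction Pointwise Equiv

section OrbitFiniteness

variable {Γ X Y : Type*} [Group Γ] [MulAction Γ X] [MulAction Γ Y]

theorem MulAction.orbit_finite_of_le_stabilizer {K : Subgroup Γ} {x : X}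
    (hK : K ≤ stabilizer Γ x) : (orbit K x).Finite :=
  (Set.finite_singleton x).subset fun _ ⟨k, hk⟩ => hk ▸ hK k.2

theorem MulAction.orbit_finite_iff_relIndex_ne_zero (K : Subgroup Γ) (y : Y) :
    (orbit K y).Finite ↔ (stabilizer Γ y).relIndex K ≠ 0 := by
  have : (stabilizer Γ y).subgroupOf K = stabilizer K y := rfl
  rw [Subgroup.relIndex, this, index_stabilizer]
  exact ⟨fun h => ((Set.ncard_pos h).2 ⟨y, mem_orbit_self y⟩).ne', Set.finite_of_ncard_ne_zero⟩

theorem MulAction.orbit_finite_of_orbit_inf_stabilizer_finite (K : Subgroup Γ) {x : X} {y : Y}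
    (hx : (orbit K x).Finite) (hy : (orbit ↥(stabilizer Γ x ⊓ K) y).Finite) :
    (orbit K y).Finite := by
  rw [orbit_finite_iff_relIndex_ne_zero] at *
  refine ne_zero_of_dvd_ne_zero ?_ (Subgroup.relIndex_dvd_of_le_left K
    (inf_le_left : stabilizer Γ y ⊓ stabilizer Γ x ≤ _))
  rw [← Subgroup.relIndex_inf_mul_relIndex]
  exact mul_ne_zero hy hx

/-- B. H. Neumann's lemma: otherwise `Γ` is covered by the finitely many cosets `{h | h • d = e}`
of stabilisers, so one of them has finite index. -/
theorem MulAction.exists_smul_ne_of_orbit_infinite {e : Y} (he : (orbit Γ e).Infinite)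
    {s : Set Y} (hs : s.Finite) : ∃ h : Γ, ∀ d ∈ s, h • d ≠ e := by
  classical
  by_contra! hcover
  have hrep : ∀ d, ∃ g : Γ, e ∈ orbit Γ d → g • d = e := fun d => by
    by_cases hd : e ∈ orbit Γ d
    · exact hd.imp fun g hg _ => hg
    · exact ⟨1, fun h => absurd h hd⟩
  choose g hg using hrep
  obtain ⟨d, hd, hfin⟩ := Subgroup.exists_finiteIndex_of_leftCoset_cover
    (H := fun d => stabilizer Γ d) (g := g) (s := hs.toFinset.filter (e ∈ orbit Γ ·)) (by
      refine Set.eq_univ_of_forall fun h => ?_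
      obtain ⟨d, hd, hde⟩ := hcover h
      have hed : e ∈ orbit Γ d := ⟨h, hde⟩
      refine Set.mem_biUnion (Finset.mem_filter.2 ⟨hs.mem_toFinset.2 hd, hed⟩) ?_
      rw [Set.mem_smul_set_iff_inv_smul_mem, SetLike.mem_coe, mem_stabilizer_iff, smul_eq_mul,
        mul_smul, hde, ← hg d hed, inv_smul_smul])
  refine he ?_
  rw [orbit_eq_iff.2 (Finset.mem_filter.1 hd).2, ← Set.finite_coe_iff]
  exact Finite.of_equiv _ (orbitEquivQuotientStabilizer Γ d).symm

theorem fixingSubgroup_singleton (x : X) : fixingSubgroup Γ {x} = stabilizer Γ x := by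
  ext g
  simp [mem_fixingSubgroup_iff]

end OrbitFiniteness

variable {Ω : Type*} {n : ℕ} {G : Subgroup (Perm Ω)}

theorem sAct_eq_smul (g : Perm Ω) (c : Set (Fin n → Ω)) : sAct g c = g • c := rfl

theorem NoAlg.mem_of_orbit_finite (hG : NoAlg (G : Set (Perm Ω))) {s : Set Ω} (hs : s.Finite)
    {a : Ω} (ha : (orbit ↥(G ⊓ fixingSubgroup (Perm Ω) s) a).Finite) : a ∈ s := by
  obtain ⟨m, y, rfl⟩ := hs.fin_embedding
  obtain ⟨i, rfl⟩ := hG m y a <| ha.subset fun _ ⟨g, hg, hy, hb⟩ =>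
    ⟨⟨g, hg, by simpa [mem_fixingSubgroup_iff] using hy⟩, hb.symm⟩
  exact ⟨i, rfl⟩

theorem NoAlgOn.mem_of_orbit_finite {B : Set (Set (Fin n → Ω))}
    (hB : NoAlgOn (G : Set (Perm Ω)) B) {t : Set (Set (Fin n → Ω))} (htB : t ⊆ B)
    (ht : t.Finite) {c : Set (Fin n → Ω)} (hc : c ∈ B)
    (h : (orbit ↥(G ⊓ fixingSubgroup (Perm Ω) t) c).Finite) : c ∈ t := by
  obtain ⟨m, cc, rfl⟩ := ht.fin_embedding
  obtain ⟨i, rfl⟩ := hB m cc c (fun i => htB ⟨i, rfl⟩) hc <| h.subset fun _ ⟨g, hg, hcc, hb⟩ =>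
    ⟨⟨g, hg, by simpa [mem_fixingSubgroup_iff, sAct_eq_smul] using hcc⟩, hb.symm⟩
  exact ⟨i, rfl⟩

theorem DenseClasses.exists_finite {B : Set (Set (Fin n → Ω))}
    (hd : DenseClasses (G : Set (Perm Ω)) B) (a : Ω) :
    ∃ t ⊆ B, t.Finite ∧ G ⊓ fixingSubgroup (Perm Ω) t ≤ stabilizer (Perm Ω) a := by
  obtain ⟨k, cc, hccB, hcca⟩ := hd a
  refine ⟨Set.range cc, Set.range_subset_iff.2 hccB, Set.finite_range cc, fun g hg => ?_⟩
  exact hcca g hg.1 fun i => (mem_fixingSubgroup_iff _).1 hg.2 _ ⟨i, rfl⟩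

section Classes

variable {U : Set (Fin n → Ω)} {r : (Fin n → Ω) → (Fin n → Ω) → Prop}

structure IsInvariantEquivOn (G : Subgroup (Perm Ω)) (U : Set (Fin n → Ω))
    (r : (Fin n → Ω) → (Fin n → Ω) → Prop) : Prop where
  smul_mem : ∀ g ∈ G, ∀ u ∈ U, g • u ∈ U
  refl : ∀ u ∈ U, r u u
  symm : ∀ u ∈ U, ∀ v ∈ U, r u v → r v u
  trans : ∀ u ∈ U, ∀ v ∈ U, ∀ w ∈ U, r u v → r v w → r u w
  smul : ∀ g ∈ G, ∀ u ∈ U, ∀ v ∈ U, r u v → r (g • u) (g • v)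

namespace IsInvariantEquivOn

theorem cls_eq_of_mem (hR : IsInvariantEquivOn G U r) {u v : Fin n → Ω} (hu : u ∈ U)
    (hv : v ∈ cls U r u) : cls U r v = cls U r u := by
  obtain ⟨hvU, huv⟩ := hv
  ext w
  exact ⟨fun ⟨hwU, hvw⟩ => ⟨hwU, hR.trans u hu v hvU w hwU huv hvw⟩,
    fun ⟨hwU, huw⟩ => ⟨hwU, hR.trans v hvU u hu w hwU (hR.symm u hu v hvU huv) huw⟩⟩

theorem smul_cls (hR : IsInvariantEquivOn G U r) {g : Perm Ω} (hg : g ∈ G) {u : Fin n → Ω}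
    (hu : u ∈ U) : g • cls U r u = cls U r (g • u) := by
  ext w
  constructor
  · rintro ⟨v, ⟨hvU, huv⟩, rfl⟩
    exact ⟨hR.smul_mem g hg v hvU, hR.smul g hg u hu v hvU huv⟩
  · rintro ⟨hwU, huw⟩
    refine ⟨g⁻¹ • w, ⟨hR.smul_mem _ (inv_mem hg) w hwU, ?_⟩, smul_inv_smul g w⟩
    simpa using hR.smul _ (inv_mem hg) _ (hR.smul_mem g hg u hu) w hwU huw

theorem smul_mem_classes (hR : IsInvariantEquivOn G U r) {g : Perm Ω} (hg : g ∈ G)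
    {c : Set (Fin n → Ω)} (hc : c ∈ classes U r) : g • c ∈ classes U r := by
  obtain ⟨u, hu, rfl⟩ := hc
  exact ⟨g • u, hR.smul_mem g hg u hu, hR.smul_cls hg hu⟩

theorem nonempty_of_mem_classes (hR : IsInvariantEquivOn G U r) {c : Set (Fin n → Ω)}
    (hc : c ∈ classes U r) : c.Nonempty := by
  obtain ⟨u, hu, rfl⟩ := hc
  exact ⟨u, hu, hR.refl u hu⟩

theorem inf_fixingSubgroup_le_stabilizer (hR : IsInvariantEquivOn G U r)
    {c : Set (Fin n → Ω)} (hc : c ∈ classes U r) {v : Fin n → Ω} (hv : v ∈ c) :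
    G ⊓ fixingSubgroup (Perm Ω) (Set.range v) ≤ stabilizer (Perm Ω) c := by
  rintro g ⟨hg, hgfix⟩
  obtain ⟨u, hu, rfl⟩ := hc
  have hgv : g • v = v := funext fun i => (mem_fixingSubgroup_iff _).1 hgfix _ ⟨i, rfl⟩
  rw [mem_stabilizer_iff, ← hR.cls_eq_of_mem hu hv, hR.smul_cls hg hv.1, hgv]

end IsInvariantEquivOn

end Classes

section Entangles

variable {a : Ω} {c : Set (Fin n → Ω)}

theorem Entangles.smul (h : Entangles a c) (g : Perm Ω) : Entangles (g • a) (g • c) := by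
  rintro _ ⟨v, hv, rfl⟩
  obtain ⟨i, hi⟩ := h v hv
  exact ⟨i, by simp [hi]⟩

theorem Entangles.orbit_finite (h : Entangles a c) (hc : c.Nonempty) {K : Subgroup (Perm Ω)}
    (hK : K ≤ stabilizer (Perm Ω) c) : (orbit K a).Finite := by
  obtain ⟨v, hv⟩ := hc
  refine (Set.finite_range v).subset ?_
  rintro _ ⟨k, rfl⟩
  have hka := h.smul (k : Perm Ω)
  rw [mem_stabilizer_iff.1 (hK k.2)] at hka
  exact hka v hv

end Entangles

section Entanglement

variable {U : Set (Fin n → Ω)} {r : (Fin n → Ω) → (Fin n → Ω) → Prop}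

theorem exists_entangles (hR : IsInvariantEquivOn G U r) (hG : NoAlg (G : Set (Perm Ω)))
    (hd : DenseClasses (G : Set (Perm Ω)) (classes U r)) (a : Ω) :
    ∃ c ∈ classes U r, Entangles a c := by
  obtain ⟨t, htB, ht, hta⟩ := hd.exists_finite a
  by_contra! hnone
  have havoid : ∀ c : t, ∃ v ∈ (c : Set (Fin n → Ω)), ∀ i, v i ≠ a := fun c => by
    simpa [Entangles] using hnone c (htB c.2)
  choose v hvc hva using havoid
  have := ht.to_subtype
  -- The entries of the chosen tuples pin down every class of `t`, hence `a`.
  have hpin : G ⊓ fixingSubgroup (Perm Ω) (⋃ c : t, Set.range (v c)) ≤ stabilizer (Perm Ω) a := by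
    refine le_trans (le_inf inf_le_left fun g hg => ?_) hta
    obtain ⟨hgG, hgfix⟩ := Subgroup.mem_inf.1 hg
    refine (mem_fixingSubgroup_iff _).2 fun c hc => ?_
    exact hR.inf_fixingSubgroup_le_stabilizer (htB hc) (hvc ⟨c, hc⟩) <| Subgroup.mem_inf.2
      ⟨hgG, fixingSubgroup_antitone _ _ (Set.subset_iUnion _ ⟨c, hc⟩) hgfix⟩
  obtain ⟨c, i, hi⟩ := Set.mem_iUnion.1 <| hG.mem_of_orbit_finite
    (Set.finite_iUnion fun c => Set.finite_range (v c)) (orbit_finite_of_le_stabilizer hpin)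
  exact hva c i hi

theorem Entangles.orbit_inf_stabilizer_infinite (hG : NoAlg (G : Set (Perm Ω))) {a x : Ω}
    {c : Set (Fin n → Ω)} (hac : Entangles a c) (hc : c.Nonempty) (hax : a ≠ x) :
    (orbit ↥(G ⊓ stabilizer (Perm Ω) x) c).Infinite := by
  intro hfin
  have ha := orbit_finite_of_orbit_inf_stabilizer_finite _ hfin (hac.orbit_finite hc inf_le_left)
  rw [← fixingSubgroup_singleton] at ha
  exact hax (hG.mem_of_orbit_finite (Set.finite_singleton x) ha)

/-- Translate the classes given by density off `e` by an element of `G_x` (Neumann's lemma). -/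
theorem DenseClasses.exists_finite_not_mem (hd : DenseClasses (G : Set (Perm Ω)) (classes U r))
    (hR : IsInvariantEquivOn G U r) {x : Ω} {e : Set (Fin n → Ω)}
    (he : (orbit ↥(G ⊓ stabilizer (Perm Ω) x) e).Infinite) :
    ∃ t ⊆ classes U r, t.Finite ∧ e ∉ t ∧
      G ⊓ fixingSubgroup (Perm Ω) t ≤ stabilizer (Perm Ω) x := by
  obtain ⟨t, htB, ht, htx⟩ := hd.exists_finite x
  obtain ⟨⟨h, hG, hx⟩, hh⟩ := exists_smul_ne_of_orbit_infinite he ht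
  refine ⟨h • t, ?_, ht.smul_set, fun ⟨d, hd, hde⟩ => hh d hd hde, ?_⟩
  · rintro _ ⟨d, hd, rfl⟩
    exact hR.smul_mem_classes hG (htB hd)
  · rintro g ⟨hgG, hgt⟩
    have hconj : h⁻¹ * g * h ∈ G ⊓ fixingSubgroup (Perm Ω) t := by
      refine Subgroup.mem_inf.2
        ⟨mul_mem (mul_mem (inv_mem hG) hgG) hG, (mem_fixingSubgroup_iff _).2 fun d hd => ?_⟩
      rw [mul_smul, mul_smul, (mem_fixingSubgroup_iff _).1 hgt _ (Set.smul_mem_smul_set hd),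
        inv_smul_smul]
    have hx : h • x = x := hx
    have hgx := htx hconj
    rwa [mem_stabilizer_iff, mul_smul, mul_smul, hx, inv_smul_eq_iff, hx] at hgx

theorem setOf_entangles_finite (hR : IsInvariantEquivOn G U r) (hG : NoAlg (G : Set (Perm Ω)))
    (hB : NoAlgOn (G : Set (Perm Ω)) (classes U r))
    (hd : DenseClasses (G : Set (Perm Ω)) (classes U r)) (a : Ω) :
    {c ∈ classes U r | Entangles a c}.Finite := by
  obtain ⟨t, htB, ht, hta⟩ := hd.exists_finite a
  refine ht.subset fun e ⟨he, hae⟩ => ?_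
  obtain ⟨w, hwe⟩ := hR.nonempty_of_mem_classes he
  have hpin : ∀ i, ∃ t' ⊆ classes U r, t'.Finite ∧ e ∉ t' ∧
      (w i ≠ a → G ⊓ fixingSubgroup (Perm Ω) t' ≤ stabilizer (Perm Ω) (w i)) := fun i => by
    by_cases hwa : w i = a
    · exact ⟨∅, Set.empty_subset _, Set.finite_empty, Set.notMem_empty e, absurd hwa⟩
    · obtain ⟨t', ht'B, ht', het', ht'w⟩ := hd.exists_finite_not_mem hR
        (hae.orbit_inf_stabilizer_infinite hG ⟨w, hwe⟩ (Ne.symm hwa))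
      exact ⟨t', ht'B, ht', het', fun _ => ht'w⟩
  choose T hTB hT heT hTw using hpin
  -- `t ∪ ⋃ T i` pins down every entry of `w`, hence `e`; so it contains `e`, which is in no `T i`.
  have hpin_e : G ⊓ fixingSubgroup (Perm Ω) (t ∪ ⋃ i, T i) ≤ stabilizer (Perm Ω) e := by
    refine le_trans (le_inf inf_le_left fun g hg => ?_) (hR.inf_fixingSubgroup_le_stabilizer he hwe)
    refine (mem_fixingSubgroup_iff _).2 ?_
    rintro _ ⟨i, rfl⟩
    by_cases hwa : w i = a
    · rw [hwa]
      exact hta ⟨hg.1, fixingSubgroup_antitone _ _ Set.subset_union_left hg.2⟩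
    · exact hTw i hwa ⟨hg.1, fixingSubgroup_antitone _ _
        (Set.subset_union_right.trans' (Set.subset_iUnion T i)) hg.2⟩
  rcases hB.mem_of_orbit_finite (Set.union_subset htB (Set.iUnion_subset hTB))
    (ht.union (Set.finite_iUnion hT)) he (orbit_finite_of_le_stabilizer hpin_e) with h | h
  · exact h
  · obtain ⟨i, hi⟩ := Set.mem_iUnion.1 h
    exact absurd hi (heT i)

theorem entangles_unique (hR : IsInvariantEquivOn G U r) (hG : NoAlg (G : Set (Perm Ω)))
    (hB : NoAlgOn (G : Set (Perm Ω)) (classes U r))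
    (hd : DenseClasses (G : Set (Perm Ω)) (classes U r)) {a : Ω} {c₁ c₂ : Set (Fin n → Ω)}
    (hc₁ : c₁ ∈ classes U r) (hc₂ : c₂ ∈ classes U r) (h₁ : Entangles a c₁)
    (h₂ : Entangles a c₂) : c₁ = c₂ := by
  have ha : (orbit ↥(G ⊓ stabilizer (Perm Ω) c₁) a).Finite :=
    h₁.orbit_finite (hR.nonempty_of_mem_classes hc₁) inf_le_right
  have hc : (orbit ↥(stabilizer (Perm Ω) a ⊓ (G ⊓ stabilizer (Perm Ω) c₁)) c₂).Finite := by
    refine (setOf_entangles_finite hR hG hB hd a).subset ?_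
    rintro _ ⟨⟨g, hg⟩, rfl⟩
    obtain ⟨hga, hgG⟩ := Subgroup.mem_inf.1 hg
    refine ⟨hR.smul_mem_classes (Subgroup.mem_inf.1 hgG).1 hc₂, ?_⟩
    have hgc₂ := h₂.smul g
    rwa [mem_stabilizer_iff.1 hga] at hgc₂
  have hc₂₁ := orbit_finite_of_orbit_inf_stabilizer_finite _ ha hc
  rw [← fixingSubgroup_singleton] at hc₂₁
  exact (hB.mem_of_orbit_finite (Set.singleton_subset_iff.2 hc₁) (Set.finite_singleton c₁) hc₂
    hc₂₁).symm

theorem inf_stabilizer_le_stabilizer_of_entangles (hR : IsInvariantEquivOn G U r)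
    (hG : NoAlg (G : Set (Perm Ω))) (hB : NoAlgOn (G : Set (Perm Ω)) (classes U r))
    (hd : DenseClasses (G : Set (Perm Ω)) (classes U r)) {a : Ω} {c : Set (Fin n → Ω)}
    (hc : c ∈ classes U r) (hac : Entangles a c) :
    G ⊓ stabilizer (Perm Ω) a ≤ stabilizer (Perm Ω) c := by
  rintro g ⟨hgG, hga⟩
  have hgac := hac.smul g
  rw [mem_stabilizer_iff.1 hga] at hgac
  exact entangles_unique hR hG hB hd (hR.smul_mem_classes hgG hc) hc hgac hac

theorem eq_of_entangles_of_entangles (hR : IsInvariantEquivOn G U r)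
    (hG : NoAlg (G : Set (Perm Ω))) (hB : NoAlgOn (G : Set (Perm Ω)) (classes U r))
    (hd : DenseClasses (G : Set (Perm Ω)) (classes U r)) {a a' : Ω} {c : Set (Fin n → Ω)}
    (hc : c ∈ classes U r) (ha : Entangles a c) (ha' : Entangles a' c) : a = a' := by
  have := ha'.orbit_finite (hR.nonempty_of_mem_classes hc)
    (inf_stabilizer_le_stabilizer_of_entangles hR hG hB hd hc ha)
  rw [← fixingSubgroup_singleton] at this
  exact (hG.mem_of_orbit_finite (Set.finite_singleton a) this).symm

theorem exists_entangles_of_mem_classes (hR : IsInvariantEquivOn G U r)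
    (hG : NoAlg (G : Set (Perm Ω))) (hB : NoAlgOn (G : Set (Perm Ω)) (classes U r))
    (hd : DenseClasses (G : Set (Perm Ω)) (classes U r)) {c : Set (Fin n → Ω)}
    (hc : c ∈ classes U r) : ∃ a, Entangles a c := by
  obtain ⟨u, hu⟩ := hR.nonempty_of_mem_classes hc
  choose θ hθB hθ using exists_entangles hR hG hd
  -- Fixing the classes `θ (u i)` fixes each entry `u i`, since `θ` is injective.
  have hpin : G ⊓ fixingSubgroup (Perm Ω) (Set.range fun i => θ (u i)) ≤ stabilizer (Perm Ω) c := by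
    refine le_trans (le_inf inf_le_left fun g hg => ?_) (hR.inf_fixingSubgroup_le_stabilizer hc hu)
    refine (mem_fixingSubgroup_iff _).2 ?_
    rintro _ ⟨i, rfl⟩
    have hgu := (hθ (u i)).smul g
    rw [(mem_fixingSubgroup_iff _).1 hg.2 _ ⟨i, rfl⟩] at hgu
    exact (eq_of_entangles_of_entangles hR hG hB hd (hθB (u i)) (hθ (u i)) hgu).symm
  obtain ⟨i, rfl⟩ := hB.mem_of_orbit_finite (Set.range_subset_iff.2 fun i => hθB (u i))
    (Set.finite_range _) hc (orbit_finite_of_le_stabilizer hpin)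
  exact ⟨u i, hθ (u i)⟩

end Entanglement

theorem entanglement_bijection_general
    {Ω : Type}
    (G : Subgroup (Equiv.Perm Ω))
    (hGnoalg : NoAlg (G : Set (Equiv.Perm Ω)))
    {n : ℕ} (U : Set (Fin n → Ω))
    (hUinv : ∀ g ∈ G, ∀ u ∈ U, tAct g u ∈ U)
    (r : (Fin n → Ω) → (Fin n → Ω) → Prop)
    (hrefl : ∀ u ∈ U, r u u)
    (hsymm : ∀ u ∈ U, ∀ v ∈ U, r u v → r v u)
    (htrans : ∀ u ∈ U, ∀ v ∈ U, ∀ w ∈ U, r u v → r v w → r u w)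
    (hrinv : ∀ g ∈ G, ∀ u ∈ U, ∀ v ∈ U, r u v → r (tAct g u) (tAct g v))
    (hdense : DenseClasses (G : Set (Equiv.Perm Ω)) (classes U r))
    (hBnoalg : NoAlgOn (G : Set (Equiv.Perm Ω)) (classes U r)) :
    ∃ θ : Ω → Set (Fin n → Ω),
      Set.BijOn θ Set.univ (classes U r) ∧
      (∀ (a : Ω), ∀ c ∈ classes U r, (Entangles a c ↔ θ a = c)) ∧
      (∀ g ∈ G, ∀ a : Ω, θ (g a) = sAct g (θ a)) := by
  have hR : IsInvariantEquivOn G U r := ⟨hUinv, hrefl, hsymm, htrans, hrinv⟩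
  choose θ hθB hθ using exists_entangles hR hGnoalg hdense
  have hθ_eq : ∀ a, ∀ c ∈ classes U r, Entangles a c → θ a = c := fun a c hc hac =>
    entangles_unique hR hGnoalg hBnoalg hdense (hθB a) hc (hθ a) hac
  refine ⟨θ, ⟨fun a _ => hθB a, fun a _ a' _ h => ?_, fun c hc => ?_⟩,
    fun a c hc => ⟨hθ_eq a c hc, ?_⟩, fun g hg a => ?_⟩
  · exact eq_of_entangles_of_entangles hR hGnoalg hBnoalg hdense (hθB a) (hθ a) (h ▸ hθ a')
  · obtain ⟨a, ha⟩ := exists_entangles_of_mem_classes hR hGnoalg hBnoalg hdense hc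
    exact ⟨a, trivial, hθ_eq a c hc ha⟩
  · rintro rfl
    exact hθ a
  · exact hθ_eq _ _ (hR.smul_mem_classes hg (hθB a)) ((hθ a).smul g)

theorem entanglement_bijection
    {Ω : Type} [Countable Ω] [Infinite Ω]
    (G : Subgroup (Equiv.Perm Ω))
    (hGclosed : TopClosedPerm (G : Set (Equiv.Perm Ω)))
    (hGoligo : Oligo (G : Set (Equiv.Perm Ω)))
    (hGnoalg : NoAlg (G : Set (Equiv.Perm Ω)))
    {n : ℕ} (U : Set (Fin n → Ω))
    (hUinv : ∀ g ∈ G, ∀ u ∈ U, tAct g u ∈ U)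
    (r : (Fin n → Ω) → (Fin n → Ω) → Prop)
    (hrefl : ∀ u ∈ U, r u u)
    (hsymm : ∀ u ∈ U, ∀ v ∈ U, r u v → r v u)
    (htrans : ∀ u ∈ U, ∀ v ∈ U, ∀ w ∈ U, r u v → r v w → r u w)
    (hrinv : ∀ g ∈ G, ∀ u ∈ U, ∀ v ∈ U, r u v → r (tAct g u) (tAct g v))
    (hdense : DenseClasses (G : Set (Equiv.Perm Ω)) (classes U r))
    (hBnoalg : NoAlgOn (G : Set (Equiv.Perm Ω)) (classes U r)) :
    ∃ θ : Ω → Set (Fin n → Ω),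
      Set.BijOn θ Set.univ (classes U r) ∧
      (∀ (a : Ω), ∀ c ∈ classes U r, (Entangles a c ↔ θ a = c)) ∧
      (∀ g ∈ G, ∀ a : Ω, θ (g a) = sAct g (θ a)) :=
  entanglement_bijection_general G hGnoalg U hUinv r hrefl hsymm htrans hrinv hdense hBnoalg
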